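/- Let X be a finite nonempty set and ≼ a total consistent preorder on Dist(X) (probability distributions on X). If α₁,...,αₙ are nonnegative reals summing to one and A₁,...,Aₙ, B₁,...,Bₙ are distributions on X with Aᵢ ≼ Bᵢ for all i, then Σ αᵢAᵢ ≼ Σ αᵢBᵢ. -/

import Mathlib

open Finset

/-- `p` is a probability mass function on the finite type `X`. -/
def IsDist {X : Type*} [Fintype X] (p : X → ℝ) : Prop :=
  (∀ x, 0 ≤ p x) ∧ ∑ x, p x = 1

/-- Pointwise convex combination of two (distributions viewed as) functions. -/
def mix {X : Type*} (α : ℝ) (A B : X → ℝ) : X → ℝ :=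
  fun x => α * A x + (1 - α) * B x

/-- `R` restricted to distributions is a total consistent preorder. -/
def TotalConsistentPreorder {X : Type*} [Fintype X]
    (R : (X → ℝ) → (X → ℝ) → Prop) : Prop :=
  (∀ A, IsDist A → R A A) ∧
  (∀ A B C, IsDist A → IsDist B → IsDist C → R A B → R B C → R A C) ∧
  (∀ A B, IsDist A → IsDist B → (R A B ∨ R B A)) ∧
  (∀ α : ℝ, 0 < α → α < 1 → ∀ A B C, IsDist A → IsDist B → IsDist C →
    R A B → R (mix α A C) (mix α B C))

/-! A convex combination is peeled off one summand at a time: with `t` the mass of the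
tail, `∑ αᵢ Aᵢ = α₀ A₀ + t · (∑ (αᵢ₊₁ / t) Aᵢ₊₁)`, and the renormalised tail is again a
convex combination, so it suffices that two-term mixtures are monotone in both arguments.
That follows from consistency applied once in each argument, chained by transitivity. -/

section Mix

variable {X : Type*}

theorem isDist_iff_mem_stdSimplex [Fintype X] {p : X → ℝ} :
    IsDist p ↔ p ∈ stdSimplex ℝ X :=
  Iff.rfl

@[simp]
theorem mix_zero (A B : X → ℝ) : mix 0 A B = B := by
  funext x; simp [mix]

@[simp]
theorem mix_one (A B : X → ℝ) : mix 1 A B = A := by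
  funext x; simp [mix]

theorem mix_one_sub (a : ℝ) (A B : X → ℝ) : mix (1 - a) A B = mix a B A := by
  funext x; simp only [mix]; ring

theorem mix_eq_smul_add_smul (a : ℝ) (A B : X → ℝ) : mix a A B = a • A + (1 - a) • B :=
  rfl

variable [Fintype X]

theorem IsDist.mix {a : ℝ} (ha₀ : 0 ≤ a) (ha₁ : a ≤ 1) {A B : X → ℝ}
    (hA : IsDist A) (hB : IsDist B) : IsDist (mix a A B) := by
  rw [isDist_iff_mem_stdSimplex, mix_eq_smul_add_smul]
  exact convex_stdSimplex ℝ X hA hB ha₀ (sub_nonneg.2 ha₁) (add_sub_cancel a 1)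

theorem isDist_sum_mul {ι : Type*} [Fintype ι] {α : ι → ℝ} (hα : ∀ i, 0 ≤ α i)
    (hsum : ∑ i, α i = 1) {A : ι → X → ℝ} (hA : ∀ i, IsDist (A i)) :
    IsDist (fun x => ∑ i, α i * A i x) := by
  rw [isDist_iff_mem_stdSimplex]
  convert (convex_stdSimplex ℝ X).sum_mem (fun i _ => hα i) hsum (fun i _ => hA i) using 1
  funext x
  simp [Finset.sum_apply]

theorem TotalConsistentPreorder.mix_mono {R : (X → ℝ) → (X → ℝ) → Prop}
    (hR : TotalConsistentPreorder R) {a : ℝ} (ha₀ : 0 ≤ a) (ha₁ : a ≤ 1)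
    {A A' B B' : X → ℝ} (hAd : IsDist A) (hA'd : IsDist A') (hBd : IsDist B)
    (hB'd : IsDist B') (hA : R A A') (hB : R B B') :
    R (mix a A B) (mix a A' B') := by
  obtain ⟨-, htrans, -, hcons⟩ := hR
  rcases ha₀.eq_or_lt with rfl | ha₀
  · simpa using hB
  rcases ha₁.eq_or_lt with rfl | ha₁
  · simpa using hA
  have hleft : R (mix a A B) (mix a A' B) := hcons a ha₀ ha₁ A A' B hAd hA'd hBd hA
  have hright : R (mix a A' B) (mix a A' B') := by
    simpa only [mix_one_sub] using
      hcons (1 - a) (sub_pos.2 ha₁) (by linarith) B B' A' hBd hB'd hA'd hB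
  exact htrans _ _ _ (hAd.mix ha₀.le ha₁.le hBd) (hA'd.mix ha₀.le ha₁.le hBd)
    (hA'd.mix ha₀.le ha₁.le hB'd) hleft hright

end Mix

section FinSucc

variable {X : Type*} {n : ℕ} {α : Fin (n + 1) → ℝ}

theorem sum_mul_eq_head_of_tail_eq_zero (hsum : ∑ i, α i = 1) (htail : ∀ i : Fin n, α i.succ = 0)
    (A : Fin (n + 1) → X → ℝ) : (fun x => ∑ i, α i * A i x) = A 0 := by
  have hhead : α 0 = 1 := by simpa [Fin.sum_univ_succ, htail] using hsum
  funext x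
  simp [Fin.sum_univ_succ, htail, hhead]

theorem sum_mul_eq_mix_head_tail (hsum : ∑ i, α i = 1) (htail : ∑ i : Fin n, α i.succ ≠ 0)
    (A : Fin (n + 1) → X → ℝ) :
    (fun x => ∑ i, α i * A i x) =
      mix (α 0) (A 0) (fun x => ∑ i : Fin n, α i.succ / (∑ j : Fin n, α j.succ) * A i.succ x) := by
  have hhead : 1 - α 0 = ∑ i : Fin n, α i.succ := by
    rw [Fin.sum_univ_succ] at hsum; linarith
  funext x
  rw [Fin.sum_univ_succ, mix, hhead, Finset.mul_sum]
  congr 1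
  refine Finset.sum_congr rfl fun i _ => ?_
  field_simp

end FinSucc

theorem mixture_monotone {X : Type*} [Fintype X]
    (R : (X → ℝ) → (X → ℝ) → Prop) (hR : TotalConsistentPreorder R)
    (n : ℕ) (α : Fin n → ℝ) (hα : ∀ i, 0 ≤ α i) (hsum : ∑ i, α i = 1)
    (A B : Fin n → X → ℝ) (hA : ∀ i, IsDist (A i)) (hB : ∀ i, IsDist (B i))
    (hAB : ∀ i, R (A i) (B i)) :
    R (fun x => ∑ i, α i * A i x) (fun x => ∑ i, α i * B i x) := by
  induction n with
  | zero => simp at hsum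
  | succ n ih =>
    set t := ∑ i : Fin n, α i.succ
    have ht : 0 ≤ t := Finset.sum_nonneg fun i _ => hα i.succ
    have hhead : α 0 = 1 - t := by rw [Fin.sum_univ_succ] at hsum; linarith
    rcases ht.eq_or_lt with ht | ht
    · have htail : ∀ i : Fin n, α i.succ = 0 :=
        fun i => (Finset.sum_eq_zero_iff_of_nonneg fun j _ => hα j.succ).1 ht.symm i (mem_univ i)
      rw [sum_mul_eq_head_of_tail_eq_zero hsum htail, sum_mul_eq_head_of_tail_eq_zero hsum htail]
      exact hAB 0
    · have hβ : ∀ i : Fin n, 0 ≤ α i.succ / t := fun i => div_nonneg (hα i.succ) ht.le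
      have hβsum : ∑ i : Fin n, α i.succ / t = 1 := by rw [← Finset.sum_div, div_self ht.ne']
      rw [sum_mul_eq_mix_head_tail hsum ht.ne', sum_mul_eq_mix_head_tail hsum ht.ne']
      exact hR.mix_mono (hα 0) (by linarith) (hA 0) (hB 0)
        (isDist_sum_mul hβ hβsum fun i => hA i.succ) (isDist_sum_mul hβ hβsum fun i => hB i.succ)
        (hAB 0) (ih _ hβ hβsum _ _ (fun i => hA i.succ) (fun i => hB i.succ) fun i => hAB i.succ)
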